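/- If H is a non-normal maximal subgroup of a finite solvable group G, then there exist a prime q and a Sylow q-subgroup Q of G such that the normalizer N_G(Q) is contained in H. -/

import Mathlib

/-!
Replacing `G` by `G / core(H)` we may assume `H` core-free. A minimal normal subgroup `N` of `G` is
then an abelian `p`-group with `G = NH`, `N ∩ H = 1` and `C_H(N) = 1`. Let `R` be a minimal normal
subgroup of `H`, an `r`-group. Since `N` is abelian, `C_N(R)` is normal in `G = NH`, so it is `1` or
`N`; the latter would put `R` inside `C_H(N) = 1`. Hence `C_N(R) = 1`, which rules out `r = p`
(an `r`-group acting on a nontrivial `r`-group fixes a nontrivial element). As `|G : H| = |N|` is a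
power of `p`, a Sylow `r`-subgroup `S` of `H` containing `R` is Sylow in `G`. Finally, if `hm`
normalizes `S` with `h ∈ H`, `m ∈ N`, then `[m, S] ⊆ N ∩ H = 1`, so `m ∈ C_N(S) ≤ C_N(R) = 1`
and `hm ∈ H`.
-/

open Subgroup
open scoped Pointwise

namespace Subgroup

variable {G : Type*} [Group G]

def IsMinimalNormal (N : Subgroup G) : Prop :=
  Minimal (fun M : Subgroup G ↦ M.Normal ∧ M ≠ ⊥) N

variable (G) in
theorem exists_isMinimalNormal [Finite G] [Nontrivial G] :
    ∃ N : Subgroup G, N.IsMinimalNormal := by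
  obtain ⟨N, -, hN⟩ := exists_minimal_le_of_wellFoundedLT
    (fun M : Subgroup G ↦ M.Normal ∧ M ≠ ⊥) ⊤ ⟨inferInstance, top_ne_bot⟩
  exact ⟨N, hN⟩

namespace IsMinimalNormal

variable {N : Subgroup G}

theorem normal (hN : N.IsMinimalNormal) : N.Normal := hN.prop.1

theorem ne_bot (hN : N.IsMinimalNormal) : N ≠ ⊥ := hN.prop.2

theorem eq_bot_or_eq (hN : N.IsMinimalNormal) {M : Subgroup G} [M.Normal] (hMN : M ≤ N) :
    M = ⊥ ∨ M = N :=
  or_iff_not_imp_left.mpr fun hM ↦ hN.eq_of_le ⟨inferInstance, hM⟩ hMN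

theorem le_centralizer [Group.IsSolvable G] (hN : N.IsMinimalNormal) : N ≤ centralizer N := by
  have := hN.normal
  rw [← commutator_eq_bot_iff_le_centralizer]
  refine (hN.eq_bot_or_eq (commutator_le_left N N)).resolve_right fun hperfect ↦ ?_
  have hder : ∀ n, N ≤ derivedSeries G n := by
    intro n
    induction n with
    | zero => exact le_top
    | succ n ih => exact hperfect ▸ (commutator_mono ih ih).trans_eq (derivedSeries_succ G n).symm
  obtain ⟨g, hg⟩ := ne_bot_iff_exists_ne_one.mp hN.ne_bot
  exact not_isSolvable_of_mem_derivedSeries (by simpa using hg) (fun n ↦ hder n g.2) ‹_›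

theorem exists_isPGroup [Finite G] [Group.IsSolvable G] (hN : N.IsMinimalNormal) :
    ∃ p, p.Prime ∧ IsPGroup p N := by
  have := hN.normal
  have : IsMulCommutative N := le_centralizer_iff_isMulCommutative.mp hN.le_centralizer
  obtain ⟨p, hp, hpN⟩ := Nat.exists_prime_and_dvd (mt card_eq_one.mp hN.ne_bot)
  have := Fact.mk hp
  let P : Sylow p N := default
  have := P.characteristic_of_normal (normal_of_isMulCommutative _)
  -- the Sylow subgroup of the abelian group `N` is characteristic, hence normal in `G`
  have hPN : P.map N.subtype = N := by
    refine (hN.eq_bot_or_eq (map_subtype_le _)).resolve_left ?_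
    rw [map_eq_bot_iff_of_injective _ N.subtype_injective]
    exact P.ne_bot_of_dvd_card hpN
  exact ⟨p, hp, hPN ▸ P.isPGroup'.map N.subtype⟩

end IsMinimalNormal

theorem isCoatom_comap_iff_of_surjective {G' : Type*} [Group G'] {φ : G →* G'}
    (hφ : Function.Surjective φ) {M : Subgroup G'} : IsCoatom (M.comap φ) ↔ IsCoatom M := by
  refine ⟨fun h ↦ ⟨fun hM ↦ h.1 (by rw [hM, comap_top]), fun K hK ↦ ?_⟩,
    isCoatom_comap_of_surjective hφ⟩
  exact comap_injective hφ
    ((h.2 _ ((comap_lt_comap_of_surjective hφ).mpr hK)).trans (comap_top φ).symm)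

theorem normalCore_map_mk'_normalCore (H : Subgroup G) :
    (H.map (QuotientGroup.mk' H.normalCore)).normalCore = ⊥ := by
  set φ := QuotientGroup.mk' H.normalCore
  have hφ : Function.Surjective φ := QuotientGroup.mk'_surjective _
  set L := (H.map φ).normalCore
  have hL : L.comap φ ≤ H.normalCore := by
    refine normal_le_normalCore.mpr ?_
    calc L.comap φ ≤ (H.map φ).comap φ := comap_mono (normalCore_le _)
      _ = H := comap_map_eq_self (by rw [QuotientGroup.ker_mk']; exact normalCore_le H)
  rw [← map_comap_eq_self_of_surjective hφ L, map_eq_bot_iff, QuotientGroup.ker_mk']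
  exact hL

theorem eq_bot_of_normalCore_eq_bot {H L : Subgroup G} (hcore : H.normalCore = ⊥) (hL : L.Normal)
    (hLH : L ≤ H) : L = ⊥ :=
  le_bot_iff.mp (hcore ▸ normal_le_normalCore.mpr hLH)

theorem normal_of_sup_eq_top {N H L : Subgroup G} (hNH : N ⊔ H = ⊤)
    (hN : N ≤ centralizer L) (hH : H ≤ normalizer (L : Set G)) : L.Normal :=
  normalizer_eq_top_iff.mp <| top_le_iff.mp <|
    hNH ▸ sup_le (hN.trans (centralizer_le_normalizer _)) hH

theorem normalizer_le_normalizer_centralizer (s : Set G) :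
    normalizer s ≤ normalizer (centralizer s : Set G) :=
  le_normalizer_of_normal_subgroupOf (centralizer_le_normalizer s)

theorem exists_sylow_le_of_not_dvd_index [Finite G] {p : ℕ} [Fact p.Prime] {H R : Subgroup G}
    (hH : ¬ p ∣ H.index) (hR : IsPGroup p R) (hRH : R ≤ H) :
    ∃ S : Sylow p G, R ≤ S ∧ (S : Subgroup G) ≤ H := by
  obtain ⟨P, hP⟩ := (hR.comap_subtype (K := H)).exists_le_sylow
  have hS : ¬ p ∣ (P.map H.subtype).index := by
    rw [index_map_subtype, (Fact.out : p.Prime).dvd_mul, not_or]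
    exact ⟨P.not_dvd_index, hH⟩
  refine ⟨(P.isPGroup'.map H.subtype).toSylow hS, ?_, map_subtype_le _⟩
  calc R = (R.comap H.subtype).map H.subtype := by rw [map_comap_eq_self (by simpa using hRH)]
    _ ≤ _ := map_mono hP

theorem _root_.IsPGroup.inf_centralizer_ne_bot {p : ℕ} [Fact p.Prime] {N R : Subgroup G} [N.Normal]
    [Finite N] (hN : IsPGroup p N) (hR : IsPGroup p R) (hN1 : N ≠ ⊥) :
    N ⊓ centralizer R ≠ ⊥ := by
  let _ : MulAction R N :=
    MulAction.compHom N ((MulAut.conjNormal : G →* MulAut N).comp R.subtype)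
  have hfix1 : (1 : N) ∈ MulAction.fixedPoints R N :=
    fun r ↦ map_one (MulAut.conjNormal (r : G))
  have hpN : p ∣ Nat.card N := hN.card_eq_or_dvd.resolve_left (mt card_eq_one.mp hN1)
  obtain ⟨x, hx, hx1⟩ := hR.exists_fixed_point_of_prime_dvd_card_of_fixed_point N hpN hfix1
  refine ne_bot_iff_exists_ne_one.mpr
    ⟨⟨x, x.2, mem_centralizer_iff.mpr fun r hr ↦ ?_⟩, ?_⟩
  · exact mul_inv_eq_iff_eq_mul.mp (congrArg Subtype.val (hx ⟨r, hr⟩))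
  · exact fun h ↦ hx1 (Subtype.ext (congrArg Subtype.val h).symm)

section Complement

variable {N H : Subgroup G}

theorem isComplement'_of_sup_eq_top [N.Normal] (hNH : N ⊔ H = ⊤) (hdisj : N ⊓ H = ⊥) :
    IsComplement' N H :=
  isComplement'_of_disjoint_and_mul_eq_univ (disjoint_iff.mpr hdisj)
    (by rw [← normal_mul, hNH, coe_top])

theorem inf_eq_bot_of_normalCore_eq_bot [N.Normal] (hNH : N ⊔ H = ⊤)
    (hcore : H.normalCore = ⊥) (hNc : N ≤ centralizer N) : N ⊓ H = ⊥ :=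
  eq_bot_of_normalCore_eq_bot hcore
    (normal_of_sup_eq_top hNH (le_centralizer_iff.mpr (inf_le_left.trans hNc))
      ((le_inf le_normalizer_of_normal le_normalizer).trans inf_normalizer_le_normalizer_inf))
    inf_le_right

theorem centralizer_inf_eq_bot_of_normalCore_eq_bot [N.Normal] (hNH : N ⊔ H = ⊤)
    (hcore : H.normalCore = ⊥) : centralizer N ⊓ H = ⊥ :=
  eq_bot_of_normalCore_eq_bot hcore
    (normal_of_sup_eq_top hNH (le_centralizer_iff.mpr inf_le_left)
      ((le_inf le_normalizer_of_normal le_normalizer).trans inf_normalizer_le_normalizer_inf))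
    inf_le_right

theorem IsMinimalNormal.inf_centralizer_eq_bot {R : Subgroup G} (hN : N.IsMinimalNormal)
    (hNc : N ≤ centralizer N) (hNH : N ⊔ H = ⊤) (hcore : H.normalCore = ⊥) (hRH : R ≤ H)
    (hHR : H ≤ normalizer (R : Set G)) (hR : R ≠ ⊥) : N ⊓ centralizer R = ⊥ := by
  have := hN.normal
  have : (N ⊓ centralizer R).Normal :=
    normal_of_sup_eq_top hNH (le_centralizer_iff.mpr (inf_le_left.trans hNc))
      ((le_inf le_normalizer_of_normal (hHR.trans (normalizer_le_normalizer_centralizer _))).trans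
        inf_normalizer_le_normalizer_inf)
  refine (hN.eq_bot_or_eq inf_le_left).resolve_right fun hNR ↦ hR ?_
  have hRN : R ≤ centralizer N := le_centralizer_iff.mp (hNR ▸ inf_le_right)
  exact le_bot_iff.mp (centralizer_inf_eq_bot_of_normalCore_eq_bot hNH hcore ▸ le_inf hRN hRH)

theorem normalizer_le_of_inf_centralizer_eq_bot [N.Normal] {S : Subgroup G} (hNH : N ⊔ H = ⊤)
    (hdisj : N ⊓ H = ⊥) (hSH : S ≤ H) (hS : N ⊓ centralizer S = ⊥) :
    normalizer (S : Set G) ≤ H := by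
  intro g hg
  obtain ⟨h, hh, m, hm, rfl⟩ : g ∈ (H : Set G) * (N : Set G) := by
    rw [← mul_normal, sup_comm, hNH]; trivial
  have hmS : m ∈ centralizer S := by
    refine mem_centralizer_iff.mpr fun y hy ↦ ?_
    have hconj : m * y * m⁻¹ ∈ H := by
      have := hSH ((mem_normalizer_iff.mp hg y).mp hy)
      convert H.mul_mem (H.mul_mem (H.inv_mem hh) this) hh using 1
      group
    have hcomm : m * y * m⁻¹ * y⁻¹ ∈ N ⊓ H := by
      refine ⟨?_, H.mul_mem hconj (H.inv_mem (hSH hy))⟩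
      rw [mul_assoc m, mul_assoc m]
      exact N.mul_mem hm (Normal.conj_mem ‹_› _ (N.inv_mem hm) y)
    rw [hdisj, mem_bot, mul_inv_eq_one, mul_inv_eq_iff_eq_mul] at hcomm
    exact hcomm.symm
  have hm1 : m = 1 := mem_bot.mp (hS ▸ ⟨hm, hmS⟩)
  simpa [hm1] using hh

end Complement

theorem exists_sylow_normalizer_le_of_normalCore_eq_bot [Finite G] [Group.IsSolvable G]
    {H : Subgroup G} (hmax : IsCoatom H) (hcore : H.normalCore = ⊥) (hH : H ≠ ⊥) :
    ∃ (q : ℕ) (_ : q.Prime) (Q : Sylow q G), normalizer ((Q : Subgroup G) : Set G) ≤ H := by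
  have : Nontrivial H := (nontrivial_iff_ne_bot H).mpr hH
  have : Nontrivial G := H.subtype_injective.nontrivial
  obtain ⟨N, hN⟩ := exists_isMinimalNormal G
  have := hN.normal
  obtain ⟨p, hp, hNp⟩ := hN.exists_isPGroup
  have := Fact.mk hp
  have hNH : N ⊔ H = ⊤ := hmax.2 _ <| right_lt_sup.mpr fun hNH ↦
    hN.ne_bot (eq_bot_of_normalCore_eq_bot hcore hN.normal hNH)
  have hdisj : N ⊓ H = ⊥ := inf_eq_bot_of_normalCore_eq_bot hNH hcore hN.le_centralizer
  obtain ⟨R₀, hR₀⟩ := exists_isMinimalNormal H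
  obtain ⟨r, hr, hR₀r⟩ := hR₀.exists_isPGroup
  have := Fact.mk hr
  set R := R₀.map H.subtype
  have hHR : H ≤ normalizer (R : Set G) :=
    le_normalizer_of_normal_subgroupOf (hK := by
      rw [subgroupOf, comap_map_eq_self_of_injective H.subtype_injective]; exact hR₀.normal)
      (map_subtype_le R₀)
  have hRbot : R ≠ ⊥ := by
    rw [Ne, map_eq_bot_iff_of_injective _ H.subtype_injective]; exact hR₀.ne_bot
  have hCNR : N ⊓ centralizer R = ⊥ :=
    hN.inf_centralizer_eq_bot hN.le_centralizer hNH hcore (map_subtype_le R₀) hHR hRbot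
  have hrp : r ≠ p := by
    rintro rfl
    exact hNp.inf_centralizer_ne_bot (hR₀r.map H.subtype) hN.ne_bot hCNR
  have hindex : ¬ r ∣ H.index := by
    obtain ⟨k, hk⟩ := IsPGroup.iff_card.mp hNp
    rw [(isComplement'_of_sup_eq_top hNH hdisj).index_eq_card, hk]
    exact hr.coprime_iff_not_dvd.mp (((Nat.coprime_primes hr hp).mpr hrp).pow_right k)
  obtain ⟨S, hRS, hSH⟩ := exists_sylow_le_of_not_dvd_index hindex (hR₀r.map H.subtype)
    (map_subtype_le R₀)
  refine ⟨r, hr, S, normalizer_le_of_inf_centralizer_eq_bot hNH hdisj hSH ?_⟩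
  exact le_bot_iff.mp <|
    hCNR ▸ inf_le_inf_left N (centralizer_le (SetLike.coe_subset_coe.mpr hRS))

theorem exists_sylow_normalizer_le_comap {G' : Type*} [Group G'] [Finite G'] {φ : G' →* G}
    (hφ : Function.Surjective φ) {q : ℕ} [Fact q.Prime] {H : Subgroup G} (Q : Sylow q G)
    (hQ : normalizer ((Q : Subgroup G) : Set G) ≤ H) :
    ∃ Q' : Sylow q G', normalizer ((Q' : Subgroup G') : Set G') ≤ H.comap φ := by
  obtain ⟨Q', rfl⟩ := Sylow.mapSurjective_surjective hφ q Q
  exact ⟨Q', fun g hg ↦ hQ (le_normalizer_map φ ⟨g, hg, rfl⟩)⟩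

end Subgroup

/-- **Theorem A (Vedernikov).** If `H` is a non-normal maximal subgroup of a finite solvable
group `G`, then `N_G(Q) ≤ H` for some Sylow subgroup `Q` of `G`. -/
theorem exists_sylow_normalizer_le_of_maximal_not_normal
    {G : Type*} [Group G] [Finite G] [Group.IsSolvable G]
    (H : Subgroup G) (hmax : IsCoatom H) (hnn : ¬ H.Normal) :
    ∃ (q : ℕ) (_ : q.Prime) (Q : Sylow q G), Subgroup.normalizer ((Q : Subgroup G) : Set G) ≤ H := by
  set φ := QuotientGroup.mk' H.normalCore
  have hker : φ.ker ≤ H := by rw [QuotientGroup.ker_mk']; exact normalCore_le H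
  have hcomap : (H.map φ).comap φ = H := comap_map_eq_self hker
  have hmax' : IsCoatom (H.map φ) :=
    (isCoatom_comap_iff_of_surjective (QuotientGroup.mk'_surjective _)).mp (by rwa [hcomap])
  have hbot : H.map φ ≠ ⊥ := by
    rw [Ne, Subgroup.map_eq_bot_iff, QuotientGroup.ker_mk']
    exact fun hle ↦ hnn (le_antisymm hle (normalCore_le H) ▸ normalCore_normal H)
  obtain ⟨q, hq, Q, hQ⟩ :=
    exists_sylow_normalizer_le_of_normalCore_eq_bot hmax' (normalCore_map_mk'_normalCore H) hbot
  have := Fact.mk hq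
  obtain ⟨Q', hQ'⟩ := exists_sylow_normalizer_le_comap (QuotientGroup.mk'_surjective _) Q hQ
  exact ⟨q, hq, Q', hcomap ▸ hQ'⟩
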